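/- In horse races with memory effects and side information (finite horse set Y, finite signal set X, fully supported joint distribution P(x^n, y^n), betting fractions f_i(y_i | y^{i−1}, x^i) > 0 summing to 1 over y_i in each race, odds o_i(y_i | y^{i−1}) > 0), the average capital growth rate satisfies ⟨g_n⟩ ≤ (1/n)·⟨Σ_{i=1}^n ln o_i(y_i | y^{i−1})⟩ − (1/n)·S(Y^n) + (1/n)·I_dr(X^n → Y^n), where g_n = (1/n) Σ_i ln[f_i(y_i | y^{i−1}, x^i)·o_i(y_i | y^{i−1})], S(Y^n) = −⟨ln P(y^n)⟩ is the Shannon entropy of the winners, and I_dr(X^n → Y^n) = ⟨ln(P(y^n‖x^n)/P(y^n))⟩ is the directed information. Moreover the bound is attained by the Kelly strategy f_i(y_i | y^{i−1}, x^i) = P(y_i | y^{i−1}, x^i). -/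

import Mathlib

/-!
Since `ln (f·o) = ln f + ln o` and the directed information equals
`⟨Σ_i ln P(y_i | y^{i-1}, x^i)⟩ + S(Y^n)`, the bound reduces, race by race, to
`⟨ln f_i⟩ ≤ ⟨ln P(y_i | y^{i-1}, x^i)⟩`. This is Gibbs' inequality conditionally on the
information `(x^i, y^{i-1})` available before race `i`: by `ln t ≤ t - 1` it suffices that
`⟨f_i / P(y_i | y^{i-1}, x^i)⟩ = 1`, and conditionally on `(x^i, y^{i-1})` this expectation is
`Σ_{y_i} f_i = 1`.
-/

/-- The causally conditioned factor `P(y_i | y^{i-1}, x^i)` of the joint distribution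
`P(x^n, y^n)`, evaluated at the pair of sequences `(x, y)`. -/
noncomputable def condY {X Y : Type*} [Fintype X] [Fintype Y] [DecidableEq X]
    [DecidableEq Y] (n : ℕ)
    (P : (Fin n → X) → (Fin n → Y) → ℝ) (i : Fin n)
    (x : Fin n → X) (y : Fin n → Y) : ℝ :=
  (∑ x' : Fin n → X, ∑ y' : Fin n → Y,
      if (∀ j, j ≤ i → x' j = x j) ∧ (∀ j, j ≤ i → y' j = y j) then P x' y' else 0) /
  (∑ x' : Fin n → X, ∑ y' : Fin n → Y,
      if (∀ j, j ≤ i → x' j = x j) ∧ (∀ j, j < i → y' j = y j) then P x' y' else 0)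

open Finset Real

section ClassSum

variable {Ω : Type*} [Fintype Ω] {r : Ω → Ω → Prop} [DecidableRel r]

variable (r) in
def classSum (F : Ω → ℝ) (p : Ω) : ℝ :=
  ∑ q, if r p q then F q else 0

theorem classSum_congr (hr : Equivalence r) (F : Ω → ℝ) {p p' : Ω} (h : r p p') :
    classSum r F p = classSum r F p' :=
  sum_congr rfl fun _ _ => if_congr ⟨hr.trans (hr.symm h), hr.trans h⟩ rfl rfl

theorem classSum_pos (hr : ∀ p, r p p) {F : Ω → ℝ} (hF : ∀ q, 0 < F q) (p : Ω) :
    0 < classSum r F p := by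
  refine sum_pos' (fun q _ => ?_) ⟨p, mem_univ p, by simpa [hr p] using hF p⟩
  split_ifs
  exacts [(hF q).le, le_rfl]

theorem classSum_mul_of_invariant (F H : Ω → ℝ) {p : Ω} (hH : ∀ q, r p q → H q = H p) :
    classSum r (fun q => F q * H q) p = classSum r F p * H p := by
  rw [classSum, classSum, sum_mul]
  refine sum_congr rfl fun q _ => ?_
  split_ifs with h
  · rw [hH q h]
  · rw [zero_mul]

theorem sum_mul_classSum_mul (hr : ∀ p q, r p q → r q p) (P K : Ω → ℝ) :
    ∑ p, P p * (classSum r P p * K p) = ∑ q, P q * classSum r (fun p => P p * K p) q := by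
  simp only [classSum, sum_mul, mul_sum]
  rw [sum_comm]
  refine sum_congr rfl fun q _ => sum_congr rfl fun p _ => ?_
  by_cases h : r q p
  · rw [if_pos (hr _ _ h), if_pos h]; ring
  · rw [if_neg (fun h' => h (hr _ _ h')), if_neg h]; ring

end ClassSum

section AgreeOn

variable {ι X Y : Type*}

/-- Sharing the information `(x^i, y^{i-1})` known before race `i` is
`AgreeOn (· ≤ i) (· < i)`; sharing `(x^i, y^i)` is `AgreeOn (· ≤ i) (· ≤ i)`. -/
def AgreeOn (s t : ι → Prop) (p q : (ι → X) × (ι → Y)) : Prop :=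
  (∀ j, s j → q.1 j = p.1 j) ∧ (∀ j, t j → q.2 j = p.2 j)

instance [Fintype ι] [DecidableEq X] [DecidableEq Y] (s t : ι → Prop) [DecidablePred s]
    [DecidablePred t] : DecidableRel (AgreeOn (X := X) (Y := Y) s t) :=
  fun _ _ => inferInstanceAs (Decidable (_ ∧ _))

theorem agreeOn_equivalence (s t : ι → Prop) : Equivalence (AgreeOn (X := X) (Y := Y) s t) where
  refl _ := ⟨fun _ _ => rfl, fun _ _ => rfl⟩
  symm h := ⟨fun j hj => (h.1 j hj).symm, fun j hj => (h.2 j hj).symm⟩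
  trans h h' := ⟨fun j hj => (h'.1 j hj).trans (h.1 j hj), fun j hj => (h'.2 j hj).trans (h.2 j hj)⟩

theorem agreeOn_le_update_iff [PartialOrder ι] [DecidableEq ι] (i : ι) (x : ι → X) (y : ι → Y)
    (h : Y) (q : (ι → X) × (ι → Y)) :
    AgreeOn (· ≤ i) (· ≤ i) (x, Function.update y i h) q ↔
      AgreeOn (· ≤ i) (· < i) (x, y) q ∧ q.2 i = h := by
  refine ⟨fun H => ⟨⟨H.1, fun j hj => ?_⟩, by simpa using H.2 i le_rfl⟩, fun ⟨H, hi⟩ => ⟨H.1, ?_⟩⟩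
  · simpa [hj.ne] using H.2 j hj.le
  · intro j hj
    rcases hj.lt_or_eq with hj | rfl
    · simpa [hj.ne] using H.2 j hj
    · simpa using hi

theorem classSum_agreeOn_lt_eq_sum_update [Fintype ι] [LinearOrder ι] [Fintype X] [Fintype Y]
    [DecidableEq X] [DecidableEq Y] (F : (ι → X) × (ι → Y) → ℝ) (i : ι) (x : ι → X)
    (y : ι → Y) :
    classSum (AgreeOn (· ≤ i) (· < i)) F (x, y) =
      ∑ h : Y, classSum (AgreeOn (· ≤ i) (· ≤ i)) F (x, Function.update y i h) := by
  simp only [classSum, agreeOn_le_update_iff, ite_and]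
  rw [sum_comm]
  refine sum_congr rfl fun q _ => ?_
  split_ifs <;> simp

end AgreeOn

section HorseRace

variable {X Y : Type*} [Fintype X] [Fintype Y] [DecidableEq X] [DecidableEq Y] {n : ℕ}
  {P : (Fin n → X) → (Fin n → Y) → ℝ}

theorem condY_eq_classSum_div (i : Fin n) (x : Fin n → X) (y : Fin n → Y) :
    condY n P i x y = classSum (AgreeOn (· ≤ i) (· ≤ i)) (Function.uncurry P) (x, y) /
      classSum (AgreeOn (· ≤ i) (· < i)) (Function.uncurry P) (x, y) := by
  rw [condY, classSum, classSum, Fintype.sum_prod_type, Fintype.sum_prod_type]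
  congr 1 <;> exact sum_congr rfl fun _ _ => sum_congr rfl fun _ _ => if_congr Iff.rfl rfl rfl

theorem condY_pos (hP : ∀ x y, 0 < P x y) (i : Fin n) (x : Fin n → X) (y : Fin n → Y) :
    0 < condY n P i x y := by
  have hP' : ∀ p, 0 < Function.uncurry P p := fun p => hP p.1 p.2
  rw [condY_eq_classSum_div]
  exact div_pos (classSum_pos (agreeOn_equivalence _ _).refl hP' _)
    (classSum_pos (agreeOn_equivalence _ _).refl hP' _)

theorem sum_mul_div_condY (hP : ∀ x y, 0 < P x y) (i : Fin n)
    {g : (Fin n → X) → (Fin n → Y) → ℝ}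
    (hg_causal : ∀ (x x' : Fin n → X) (y y' : Fin n → Y),
      (∀ j, j ≤ i → x j = x' j) → (∀ j, j ≤ i → y j = y' j) → g x y = g x' y')
    (hg_sum : ∀ x y, ∑ h : Y, g x (Function.update y i h) = 1) :
    ∑ x, ∑ y, P x y * (g x y / condY n P i x y) = ∑ x, ∑ y, P x y := by
  set Mnow := classSum (AgreeOn (· ≤ i) (· ≤ i)) (Function.uncurry P)
  set Mpast := classSum (AgreeOn (· ≤ i) (· < i)) (Function.uncurry P)
  have hc : ∀ p : (Fin n → X) × (Fin n → Y), condY n P i p.1 p.2 = Mnow p / Mpast p :=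
    fun p => condY_eq_classSum_div i p.1 p.2
  have hMnow : ∀ p, 0 < Mnow p := classSum_pos (agreeOn_equivalence _ _).refl fun p => hP p.1 p.2
  have hK : ∀ p q, AgreeOn (· ≤ i) (· ≤ i) p q → g q.1 q.2 / Mnow q = g p.1 p.2 / Mnow p :=
    fun p q h => by
      rw [hg_causal _ _ _ _ h.1 h.2,
        show Mnow q = Mnow p from (classSum_congr (agreeOn_equivalence _ _) _ h).symm]
  -- The past class of `(x, y)` splits, by the value of `y i`, into present classes on which
  -- `g / Mnow` is constant.
  have hclass : ∀ q, classSum (AgreeOn (· ≤ i) (· < i))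
      (fun p => P p.1 p.2 * (g p.1 p.2 / Mnow p)) q = 1 := by
    rintro ⟨x, y⟩
    rw [classSum_agreeOn_lt_eq_sum_update, ← hg_sum x y]
    refine sum_congr rfl fun h _ => ?_
    rw [classSum_mul_of_invariant _ _ (hK _)]
    exact mul_div_cancel₀ _ (hMnow _).ne'
  calc ∑ x, ∑ y, P x y * (g x y / condY n P i x y)
      = ∑ p, P p.1 p.2 * (Mpast p * (g p.1 p.2 / Mnow p)) := by
        rw [← Fintype.sum_prod_type']
        refine sum_congr rfl fun p _ => ?_
        rw [hc, div_div_eq_mul_div]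
        ring
    _ = ∑ q, P q.1 q.2 * classSum _ (fun p => P p.1 p.2 * (g p.1 p.2 / Mnow p)) q :=
        sum_mul_classSum_mul (fun _ _ h => (agreeOn_equivalence _ _).symm h) _ _
    _ = ∑ x, ∑ y, P x y := by
        simp only [hclass, mul_one]
        exact Fintype.sum_prod_type' P

theorem sum_mul_log_le_sum_mul_log_condY (hP : ∀ x y, 0 < P x y) (i : Fin n)
    {g : (Fin n → X) → (Fin n → Y) → ℝ} (hg_pos : ∀ x y, 0 < g x y)
    (hg_causal : ∀ (x x' : Fin n → X) (y y' : Fin n → Y),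
      (∀ j, j ≤ i → x j = x' j) → (∀ j, j ≤ i → y j = y' j) → g x y = g x' y')
    (hg_sum : ∀ x y, ∑ h : Y, g x (Function.update y i h) = 1) :
    ∑ x, ∑ y, P x y * log (g x y) ≤ ∑ x, ∑ y, P x y * log (condY n P i x y) := by
  have hpoint : ∀ x y, P x y * log (g x y) ≤
      P x y * log (condY n P i x y) + (P x y * (g x y / condY n P i x y) - P x y) := by
    intro x y
    have hc := condY_pos hP i x y
    have hlog : log (g x y) ≤ log (condY n P i x y) + (g x y / condY n P i x y - 1) := by
      rw [← sub_le_iff_le_add', ← log_div (hg_pos x y).ne' hc.ne']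
      exact log_le_sub_one_of_pos (div_pos (hg_pos x y) hc)
    linarith [mul_le_mul_of_nonneg_left hlog (hP x y).le]
  calc ∑ x, ∑ y, P x y * log (g x y)
      ≤ ∑ x, ∑ y, (P x y * log (condY n P i x y) + (P x y * (g x y / condY n P i x y) - P x y)) :=
        sum_le_sum fun x _ => sum_le_sum fun y _ => hpoint x y
    _ = ∑ x, ∑ y, P x y * log (condY n P i x y) := by
        simp only [sum_add_distrib, sum_sub_distrib, sum_mul_div_condY hP i hg_causal hg_sum,
          sub_self, add_zero]

theorem sum_mul_log_prod_condY_div (hP : ∀ x y, 0 < P x y) :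
    ∑ x, ∑ y, P x y * log ((∏ i, condY n P i x y) / ∑ x', P x' y) =
      ∑ x, ∑ y, P x y * ∑ i, log (condY n P i x y) - ∑ y, (∑ x, P x y) * log (∑ x, P x y) := by
  have hlog : ∀ x y, log ((∏ i, condY n P i x y) / ∑ x', P x' y) =
      ∑ i, log (condY n P i x y) - log (∑ x', P x' y) := fun x y => by
    have hY : 0 < ∑ x', P x' y := sum_pos' (fun x' _ => (hP x' y).le) ⟨x, mem_univ x, hP x y⟩
    rw [log_div (prod_pos fun i _ => condY_pos hP i x y).ne' hY.ne',
      log_prod fun i _ => (condY_pos hP i x y).ne']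
  simp only [hlog, mul_sub, sum_sub_distrib, sum_mul]
  rw [sum_comm (f := fun x y => P x y * log (∑ x', P x' y))]

end HorseRace

section Rearrangement

variable {α β ι : Type*} [Fintype α] [Fintype β] [Fintype ι]

theorem sum_sum_mul_sum_comm (P : α → β → ℝ) (a : ι → α → β → ℝ) :
    ∑ x, ∑ y, P x y * ∑ i, a i x y = ∑ i, ∑ x, ∑ y, P x y * a i x y := by
  simp only [mul_sum]
  exact (sum_congr rfl fun _ _ => sum_comm).trans sum_comm

theorem sum_mul_mul_sum_log_mul (P : α → β → ℝ) (c : ℝ) {a : ι → α → β → ℝ} {b : ι → β → ℝ}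
    (ha : ∀ i x y, a i x y ≠ 0) (hb : ∀ i y, b i y ≠ 0) :
    ∑ x, ∑ y, P x y * (c * ∑ i, log (a i x y * b i y)) =
      c * (∑ x, ∑ y, P x y * ∑ i, log (a i x y) + ∑ x, ∑ y, P x y * ∑ i, log (b i y)) := by
  have hlog : ∀ i x y, log (a i x y * b i y) = log (a i x y) + log (b i y) :=
    fun i x y => log_mul (ha i x y) (hb i y)
  simp only [hlog, sum_add_distrib, mul_add, mul_left_comm (P _ _) c, ← mul_sum]

end Rearrangement

theorem stmt18_general {X Y : Type*} [Fintype X] [Fintype Y] [DecidableEq X] [DecidableEq Y]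
    (n : ℕ)
    (P : (Fin n → X) → (Fin n → Y) → ℝ)
    (hP : ∀ x y, 0 < P x y)
    (f : Fin n → (Fin n → X) → (Fin n → Y) → ℝ)
    (hfpos : ∀ i x y, 0 < f i x y)
    (hfcausal : ∀ (i : Fin n) (x x' : Fin n → X) (y y' : Fin n → Y),
      (∀ j, j ≤ i → x j = x' j) → (∀ j, j ≤ i → y j = y' j) → f i x y = f i x' y')
    (hfsum : ∀ (i : Fin n) (x : Fin n → X) (y : Fin n → Y),
      ∑ h : Y, f i x (Function.update y i h) = 1)
    (o : Fin n → (Fin n → Y) → ℝ)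
    (hopos : ∀ i y, 0 < o i y) :
    (∑ x, ∑ y, P x y * ((1 / (n : ℝ)) * ∑ i, Real.log (f i x y * o i y))
      ≤ (1 / (n : ℝ)) * (∑ x, ∑ y, P x y * ∑ i, Real.log (o i y))
        - (1 / (n : ℝ)) * (-(∑ y, (∑ x, P x y) * Real.log (∑ x, P x y)))
        + (1 / (n : ℝ)) * (∑ x, ∑ y, P x y *
            Real.log ((∏ i, condY n P i x y) / (∑ x', P x' y))))
    ∧ (∑ x, ∑ y, P x y * ((1 / (n : ℝ)) * ∑ i, Real.log (condY n P i x y * o i y))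
      = (1 / (n : ℝ)) * (∑ x, ∑ y, P x y * ∑ i, Real.log (o i y))
        - (1 / (n : ℝ)) * (-(∑ y, (∑ x, P x y) * Real.log (∑ x, P x y)))
        + (1 / (n : ℝ)) * (∑ x, ∑ y, P x y *
            Real.log ((∏ i, condY n P i x y) / (∑ x', P x' y)))) := by
  have ho : ∀ i y, o i y ≠ 0 := fun i y => (hopos i y).ne'
  have hkelly : ∑ x, ∑ y, P x y * ∑ i, log (f i x y) ≤
      ∑ x, ∑ y, P x y * ∑ i, log (condY n P i x y) := by
    rw [sum_sum_mul_sum_comm, sum_sum_mul_sum_comm]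
    exact sum_le_sum fun i _ =>
      sum_mul_log_le_sum_mul_log_condY hP i (hfpos i) (hfcausal i) (hfsum i)
  rw [sum_mul_mul_sum_log_mul P _ (fun i x y => (hfpos i x y).ne') ho,
    sum_mul_mul_sum_log_mul P _ (fun i x y => (condY_pos hP i x y).ne') ho,
    sum_mul_log_prod_condY_div hP]
  refine ⟨?_, by ring⟩
  have hn : (0 : ℝ) ≤ 1 / n := by positivity
  linarith [mul_le_mul_of_nonneg_left hkelly hn]

/-- In horse races with memory effects and side information, the average capital
growth rate is bounded by
`(1/n)·⟨Σ_i ln o_i⟩ - (1/n)·S(Y^n) + (1/n)·I_dr(X^n → Y^n)`, and the bound is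
attained by the Kelly strategy `f_i(y_i | y^{i-1}, x^i) = P(y_i | y^{i-1}, x^i)`. -/
theorem stmt18 {X Y : Type*} [Fintype X] [Fintype Y] [DecidableEq X] [DecidableEq Y]
    (n : ℕ) (hn : 0 < n)
    (P : (Fin n → X) → (Fin n → Y) → ℝ)
    (hP : ∀ x y, 0 < P x y) (hPsum : ∑ x, ∑ y, P x y = 1)
    (f : Fin n → (Fin n → X) → (Fin n → Y) → ℝ)
    (hfpos : ∀ i x y, 0 < f i x y)
    (hfcausal : ∀ (i : Fin n) (x x' : Fin n → X) (y y' : Fin n → Y),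
      (∀ j, j ≤ i → x j = x' j) → (∀ j, j ≤ i → y j = y' j) → f i x y = f i x' y')
    (hfsum : ∀ (i : Fin n) (x : Fin n → X) (y : Fin n → Y),
      ∑ h : Y, f i x (Function.update y i h) = 1)
    (o : Fin n → (Fin n → Y) → ℝ)
    (hopos : ∀ i y, 0 < o i y)
    (hocausal : ∀ (i : Fin n) (y y' : Fin n → Y),
      (∀ j, j ≤ i → y j = y' j) → o i y = o i y') :
    (∑ x, ∑ y, P x y * ((1 / (n : ℝ)) * ∑ i, Real.log (f i x y * o i y))
      ≤ (1 / (n : ℝ)) * (∑ x, ∑ y, P x y * ∑ i, Real.log (o i y))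
        - (1 / (n : ℝ)) * (-(∑ y, (∑ x, P x y) * Real.log (∑ x, P x y)))
        + (1 / (n : ℝ)) * (∑ x, ∑ y, P x y *
            Real.log ((∏ i, condY n P i x y) / (∑ x', P x' y))))
    ∧ (∑ x, ∑ y, P x y * ((1 / (n : ℝ)) * ∑ i, Real.log (condY n P i x y * o i y))
      = (1 / (n : ℝ)) * (∑ x, ∑ y, P x y * ∑ i, Real.log (o i y))
        - (1 / (n : ℝ)) * (-(∑ y, (∑ x, P x y) * Real.log (∑ x, P x y)))
        + (1 / (n : ℝ)) * (∑ x, ∑ y, P x y *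
            Real.log ((∏ i, condY n P i x y) / (∑ x', P x' y)))) :=
  stmt18_general n P hP f hfpos hfcausal hfsum o hopos
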